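/- arXiv:2406.06522 — 2 statements merged into one kernel-verified Lean document; each statement's English description precedes it below -/
import Mathlib

section
/- For each κ ∈ (0,8) with cos(4π/κ) > 0, there exists a unique z ∈ (0,1) such that ₂F₁(4/κ, 12/κ−1, 8/κ; z) = 2cos(4π/κ) · ₂F₁(4/κ, 12/κ−1, 8/κ; 1−z). -/
/-- Rising factorial (Pochhammer symbol) `(q)ₙ = q(q+1)⋯(q+n−1)`. -/
noncomputable def risingFac (q : ℝ) (n : ℕ) : ℝ := ∏ i ∈ Finset.range n, (q + (i : ℝ))

/-- Gauss hypergeometric function `₂F₁(a,b,c;z)`, defined as the sum of its power series. -/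
noncomputable def hyp2F1 (a b c z : ℝ) : ℝ :=
  ∑' n : ℕ, risingFac a n * risingFac b n / (risingFac c n * (Nat.factorial n : ℝ)) * z ^ n

/-- Conformal weight `h(κ) = (6−κ)/(2κ)`. -/
noncomputable def hParam (κ : ℝ) : ℝ := (6 - κ) / (2 * κ)

/-- Loop fugacity `ν(κ) = −2cos(4π/κ)`. -/
noncomputable def nuParam (κ : ℝ) : ℝ := -2 * Real.cos (4 * Real.pi / κ)

/-- Cross-ratio `χ = ((x₂−x₁)(x₄−x₃))/((x₃−x₁)(x₄−x₂))`. -/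
noncomputable def crossRatio (x₁ x₂ x₃ x₄ : ℝ) : ℝ :=
  ((x₂ - x₁) * (x₄ - x₃)) / ((x₃ - x₁) * (x₄ - x₂))

/-- Pure partition function `Z_a^(κ)` of multiple SLE_κ (N = 2). -/
noncomputable def Za (κ x₁ x₂ x₃ x₄ : ℝ) : ℝ :=
  (x₂ - x₁) ^ (-(2 * hParam κ)) * (x₄ - x₃) ^ (-(2 * hParam κ)) *
    (1 - crossRatio x₁ x₂ x₃ x₄) ^ (2 / κ) *
    (hyp2F1 (4/κ) (1 - 4/κ) (8/κ) (1 - crossRatio x₁ x₂ x₃ x₄) /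
      hyp2F1 (4/κ) (1 - 4/κ) (8/κ) 1)

/-- Pure partition function `Z_b^(κ)` of multiple SLE_κ (N = 2). -/
noncomputable def Zb (κ x₁ x₂ x₃ x₄ : ℝ) : ℝ :=
  (x₄ - x₁) ^ (-(2 * hParam κ)) * (x₃ - x₂) ^ (-(2 * hParam κ)) *
    (crossRatio x₁ x₂ x₃ x₄) ^ (2 / κ) *
    (hyp2F1 (4/κ) (1 - 4/κ) (8/κ) (crossRatio x₁ x₂ x₃ x₄) /
      hyp2F1 (4/κ) (1 - 4/κ) (8/κ) 1)

/-- The fused three-point function `Z₃^(κ)(ξ,x₃,x₄)`. -/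
noncomputable def Z3 (κ ξ x₃ x₄ : ℝ) : ℝ :=
  (x₄ - x₃) ^ (2/κ) * (x₃ - ξ) ^ (1 - 8/κ) * (x₄ - ξ) ^ (1 - 8/κ) /
    hyp2F1 (4/κ) (1 - 4/κ) (8/κ) 1

/-!
The coefficients of `₂F₁(a, b, c; ·)` are positive when `a, b, c > 0`, so it is strictly
increasing on `[0, 1)`. If moreover `c ≤ a + b`, the recursion for the coefficients shows that
`n` times the `n`-th coefficient is nondecreasing, so the coefficients dominate a multiple of the
harmonic series and `₂F₁ → ∞` as `z → 1⁻`. For `k > 0` the function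
`z ↦ ₂F₁(z) - k ₂F₁(1 - z)` is then continuous and strictly increasing on `(0, 1)`, negative near
`0` and positive near `1`, hence has exactly one zero; here `k = 2 cos(4π/κ)`.
-/

open Filter Topology Set

section Hypergeometric

variable {a b c : ℝ}

lemma risingFac_eq_ascPochhammer_eval (q : ℝ) (n : ℕ) :
    risingFac q n = (ascPochhammer ℝ n).eval q := by
  induction n with
  | zero => simp [risingFac]
  | succ n ih => rw [risingFac, Finset.prod_range_succ, ← risingFac, ih, ascPochhammer_succ_eval]

lemma hyp2F1_eq_ordinaryHypergeometric (a b c : ℝ) : hyp2F1 a b c = ₂F₁ a b c := by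
  funext z
  rw [ordinaryHypergeometric_eq_tsum, hyp2F1]
  refine tsum_congr fun n => ?_
  simp only [risingFac_eq_ascPochhammer_eval, smul_eq_mul]
  ring

lemma ordinaryHypergeometric_eq_tsum_mul (a b c z : ℝ) :
    ₂F₁ a b c z = ∑' n, ordinaryHypergeometricCoefficient a b c n * z ^ n := by
  rw [ordinaryHypergeometric_eq_tsum]
  rfl

lemma ordinaryHypergeometricCoefficient_pos (ha : 0 < a) (hb : 0 < b) (hc : 0 < c) (n : ℕ) :
    0 < ordinaryHypergeometricCoefficient a b c n := by
  have := ascPochhammer_pos n a ha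
  have := ascPochhammer_pos n b hb
  have := ascPochhammer_pos n c hc
  positivity

lemma ordinaryHypergeometricCoefficient_succ_mul (hc : 0 < c) (n : ℕ) :
    ordinaryHypergeometricCoefficient a b c (n + 1) * ((c + n) * (n + 1)) =
      ordinaryHypergeometricCoefficient a b c n * ((a + n) * (b + n)) := by
  have := (ascPochhammer_pos n c hc).ne'
  have : c + n ≠ 0 := by positivity
  simp only [ordinaryHypergeometricCoefficient, ascPochhammer_succ_eval, Nat.factorial_succ]
  push_cast
  field_simp

lemma ordinaryHypergeometricSeries_radius_eq_one_of_pos (ha : 0 < a) (hb : 0 < b) (hc : 0 < c) :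
    (ordinaryHypergeometricSeries ℝ a b c).radius = 1 :=
  ordinaryHypergeometricSeries_radius_eq_one ℝ a b c fun k =>
    ⟨by linarith [k.cast_nonneg (α := ℝ)], by linarith [k.cast_nonneg (α := ℝ)],
      by linarith [k.cast_nonneg (α := ℝ)]⟩

lemma mem_eball_ordinaryHypergeometricSeries_radius (ha : 0 < a) (hb : 0 < b) (hc : 0 < c)
    {z : ℝ} (hz : |z| < 1) :
    z ∈ Metric.eball 0 (ordinaryHypergeometricSeries ℝ a b c).radius := by
  rw [ordinaryHypergeometricSeries_radius_eq_one_of_pos ha hb hc, mem_eball_zero_iff,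
    Real.enorm_eq_ofReal_abs]
  simpa using hz

lemma summable_ordinaryHypergeometric (ha : 0 < a) (hb : 0 < b) (hc : 0 < c)
    {z : ℝ} (hz : |z| < 1) :
    Summable fun n => ordinaryHypergeometricCoefficient a b c n * z ^ n := by
  have := (ordinaryHypergeometricSeries ℝ a b c).summable
    (mem_eball_ordinaryHypergeometricSeries_radius ha hb hc hz)
  simpa only [ordinaryHypergeometricSeries_apply_eq, smul_eq_mul] using this

lemma continuousOn_ordinaryHypergeometric (ha : 0 < a) (hb : 0 < b) (hc : 0 < c) :
    ContinuousOn (₂F₁ a b c : ℝ → ℝ) (Ioo (-1) 1) :=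
  (ordinaryHypergeometricSeries ℝ a b c).continuousOn.mono fun _ hz =>
    mem_eball_ordinaryHypergeometricSeries_radius ha hb hc (abs_lt.2 hz)

lemma strictMonoOn_ordinaryHypergeometric (ha : 0 < a) (hb : 0 < b) (hc : 0 < c) :
    StrictMonoOn (₂F₁ a b c : ℝ → ℝ) (Ico 0 1) := by
  intro z hz w hw hzw
  have hcoef := ordinaryHypergeometricCoefficient_pos ha hb hc
  simp only [ordinaryHypergeometric_eq_tsum_mul]
  refine Summable.tsum_lt_tsum_of_nonneg (i := 1) (fun n => ?_) (fun n => ?_) ?_ ?_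
  · exact mul_nonneg (hcoef n).le (pow_nonneg hz.1 n)
  · exact mul_le_mul_of_nonneg_left (pow_le_pow_left₀ hz.1 hzw.le n) (hcoef n).le
  · simpa using mul_lt_mul_of_pos_left hzw (hcoef 1)
  · exact summable_ordinaryHypergeometric ha hb hc (abs_lt.2 ⟨by linarith [hz.1], hw.2⟩)

lemma monotone_natCast_mul_ordinaryHypergeometricCoefficient (ha : 0 < a) (hb : 0 < b) (hc : 0 < c)
    (habc : c ≤ a + b) :
    Monotone fun n : ℕ => n * ordinaryHypergeometricCoefficient a b c n := by
  refine monotone_nat_of_le_succ fun n => ?_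
  have hcoef := (ordinaryHypergeometricCoefficient_pos ha hb hc n).le
  have hrec := ordinaryHypergeometricCoefficient_succ_mul (a := a) (b := b) hc n
  have hcn : 0 < c + n := by positivity
  have hquad : (c + n) * n ≤ (a + n) * (b + n) := by nlinarith [n.cast_nonneg (α := ℝ)]
  refine le_of_mul_le_mul_right ?_ hcn
  push_cast
  calc n * ordinaryHypergeometricCoefficient a b c n * (c + n)
      = ordinaryHypergeometricCoefficient a b c n * ((c + n) * n) := by ring
    _ ≤ ordinaryHypergeometricCoefficient a b c n * ((a + n) * (b + n)) :=
        mul_le_mul_of_nonneg_left hquad hcoef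
    _ = (n + 1) * ordinaryHypergeometricCoefficient a b c (n + 1) * (c + n) := by
        rw [← hrec]; ring

lemma not_summable_ordinaryHypergeometricCoefficient (ha : 0 < a) (hb : 0 < b) (hc : 0 < c)
    (habc : c ≤ a + b) : ¬ Summable (ordinaryHypergeometricCoefficient a b c) := by
  intro hsum
  set C := ordinaryHypergeometricCoefficient a b c 1
  have hC : 0 < C := ordinaryHypergeometricCoefficient_pos ha hb hc 1
  -- at `n = 0` the left side is `C * (1 / 0) = 0`
  have hle : ∀ n : ℕ, C * (1 / n) ≤ ordinaryHypergeometricCoefficient a b c n := by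
    intro n
    rcases Nat.eq_zero_or_pos n with rfl | hn
    · simp
    · have hmono := monotone_natCast_mul_ordinaryHypergeometricCoefficient ha hb hc habc
        (Nat.one_le_iff_ne_zero.2 hn.ne')
      have hn' : (0 : ℝ) < n := by exact_mod_cast hn
      rw [mul_one_div, div_le_iff₀ hn']
      simpa [mul_comm] using hmono
  exact Real.not_summable_one_div_natCast <| (summable_mul_left_iff hC.ne').1 <|
    hsum.of_nonneg_of_le (fun n => by positivity) hle

lemma tendsto_ordinaryHypergeometric_nhdsLT_one (ha : 0 < a) (hb : 0 < b) (hc : 0 < c)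
    (habc : c ≤ a + b) : Tendsto (₂F₁ a b c : ℝ → ℝ) (𝓝[<] 1) atTop := by
  have hcoef := ordinaryHypergeometricCoefficient_pos ha hb hc
  have hpartial := (not_summable_iff_tendsto_nat_atTop_of_nonneg fun n => (hcoef n).le).1
    (not_summable_ordinaryHypergeometricCoefficient ha hb hc habc)
  refine tendsto_atTop.2 fun M => ?_
  obtain ⟨N, hN⟩ := (hpartial.eventually_gt_atTop M).exists
  have hpoly : ∀ᶠ z in 𝓝 (1 : ℝ), M < ∑ n ∈ Finset.range N,
      ordinaryHypergeometricCoefficient a b c n * z ^ n := by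
    refine ContinuousAt.eventually_lt continuousAt_const (by fun_prop) ?_
    simpa using hN
  filter_upwards [nhdsWithin_le_nhds hpoly, Ioo_mem_nhdsLT (zero_lt_one' ℝ)] with z hMz hz
  rw [ordinaryHypergeometric_eq_tsum_mul]
  refine hMz.le.trans <| Summable.sum_le_tsum _ (fun n _ => ?_) <|
    summable_ordinaryHypergeometric ha hb hc (abs_lt.2 ⟨by linarith [hz.1], hz.2⟩)
  exact mul_nonneg (hcoef n).le (pow_nonneg hz.1.le n)

end Hypergeometric

theorem existsUnique_eq_mul_apply_one_sub {F : ℝ → ℝ} (hmono : StrictMonoOn F (Ioo 0 1))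
    (hcont : ContinuousOn F (Ioo 0 1)) (htop : Tendsto F (𝓝[<] 1) atTop) {k : ℝ} (hk : 0 < k) :
    ∃! z, z ∈ Ioo 0 1 ∧ F z = k * F (1 - z) := by
  have hreflect : MapsTo (fun z : ℝ => 1 - z) (Ioo 0 1) (Ioo 0 1) :=
    fun z hz => ⟨by linarith [hz.2], by linarith [hz.1]⟩
  set g : ℝ → ℝ := fun z => F z - k * F (1 - z) with hg
  have hg_mono : StrictMonoOn g (Ioo 0 1) := fun y hy z hz hyz => by
    have h₁ := hmono hy hz hyz
    have h₂ := hmono (hreflect hz) (hreflect hy) (by linarith)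
    have := mul_lt_mul_of_pos_left h₂ hk
    simp only [hg]
    linarith
  have hg_cont : ContinuousOn g (Ioo 0 1) :=
    hcont.sub (continuousOn_const.mul (hcont.comp (by fun_prop) hreflect))
  have hlarge : ∀ M, ∃ w ∈ Ioo (1 / 2 : ℝ) 1, M < F w := fun M =>
    ((htop.eventually_gt_atTop M).and (Ioo_mem_nhdsLT (by norm_num))).exists.imp
      fun _ h => ⟨h.2, h.1⟩
  have hhalf : (1 / 2 : ℝ) ∈ Ioo 0 1 := by norm_num
  obtain ⟨w₁, hw₁, hFw₁⟩ := hlarge (F (1 / 2) / k)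
  obtain ⟨w₂, hw₂, hFw₂⟩ := hlarge (k * F (1 / 2))
  have hw₁' : w₁ ∈ Ioo 0 1 := ⟨by linarith [hw₁.1], hw₁.2⟩
  have hw₂' : w₂ ∈ Ioo 0 1 := ⟨by linarith [hw₂.1], hw₂.2⟩
  have hneg : g (1 - w₁) ≤ 0 := by
    have h₁ := hmono (hreflect hw₁') hhalf (by linarith [hw₁.1])
    rw [div_lt_iff₀ hk] at hFw₁
    simp only [hg, sub_sub_cancel]
    linarith
  have hpos : 0 ≤ g w₂ := by
    have h₁ := hmono (hreflect hw₂') hhalf (by linarith [hw₂.1])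
    have := mul_lt_mul_of_pos_left h₁ hk
    simp only [hg]
    linarith
  obtain ⟨z, hz, hgz⟩ := intermediate_value_Icc (by linarith [hw₁.1, hw₂.1] : 1 - w₁ ≤ w₂)
    (hg_cont.mono (Icc_subset_Ioo (hreflect hw₁').1 hw₂'.2)) ⟨hneg, hpos⟩
  have hz' : z ∈ Ioo 0 1 := ⟨(hreflect hw₁').1.trans_le hz.1, hz.2.trans_lt hw₂'.2⟩
  refine ⟨z, ⟨hz', sub_eq_zero.1 hgz⟩, fun y hy => hg_mono.injOn hy.1 hz' ?_⟩
  rw [hgz]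
  exact sub_eq_zero.2 hy.2

/-- for `κ ∈ (0,8)` with `cos(4π/κ) > 0`, there is a unique
`z ∈ (0,1)` with `₂F₁(4/κ, 12/κ−1, 8/κ; z) = 2cos(4π/κ)·₂F₁(4/κ, 12/κ−1, 8/κ; 1−z)`. -/
theorem statement15 (κ : ℝ) (hκ : κ ∈ Set.Ioo (0:ℝ) 8)
    (hcos : 0 < Real.cos (4 * Real.pi / κ)) :
    ∃! z : ℝ, z ∈ Set.Ioo (0:ℝ) 1 ∧
      hyp2F1 (4/κ) (12/κ - 1) (8/κ) z
        = 2 * Real.cos (4 * Real.pi / κ) * hyp2F1 (4/κ) (12/κ - 1) (8/κ) (1 - z) := by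
  obtain ⟨hκ0, hκ8⟩ := hκ
  have ha : 0 < 4 / κ := by positivity
  have hb : 0 < 12 / κ - 1 := by rw [sub_pos, lt_div_iff₀ hκ0]; linarith
  have hc : 0 < 8 / κ := by positivity
  have habc : 8 / κ ≤ 4 / κ + (12 / κ - 1) := by
    have : 4 / κ + (12 / κ - 1) = 8 / κ + (8 / κ - 1) := by ring
    linarith [(one_lt_div hκ0).2 hκ8]
  rw [hyp2F1_eq_ordinaryHypergeometric]
  exact existsUnique_eq_mul_apply_one_sub
    ((strictMonoOn_ordinaryHypergeometric ha hb hc).mono Ioo_subset_Ico_self)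
    ((continuousOn_ordinaryHypergeometric ha hb hc).mono (Ioo_subset_Ioo_left (by norm_num)))
    (tendsto_ordinaryHypergeometric_nhdsLT_one ha hb hc habc) (by positivity)
end

section
/- For every κ ∈ (0,8) and every z ∈ (0,1), the series ∑_{n=0}^∞ ((4/κ)_n (1−4/κ)_n / ((8/κ)_n · n!)) z^n converges and its sum is strictly positive, i.e. ₂F₁(4/κ, 1−4/κ, 8/κ; z) > 0. Consequently, Z_a^(κ)(x) > 0 and Z_b^(κ)(x) > 0 for all x₁ < x₂ < x₃ < x₄. -/
/-!
Put `a = 4/κ > 1/2`. Euler's transformation writes `₂F₁(a, 1 - a; 2a; z)` as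
`(1 - z) ^ (2a - 1) ₂F₁(a, 3a - 1; 2a; z)`; on coefficients this is a Cauchy product identity,
proved by a Wilf–Zeilberger telescoping. The coefficients of `₂F₁(a, 3a - 1; 2a; z)` dominate
`δ` times those of `(1 - z) ^ (1 - 2a)`, where `δ = 1` if `a ≤ 1` and, by log-convexity of `Γ`,
`δ = Γ(2a)Γ(2a - 1)/(Γ(a)Γ(3a - 1))` if `a > 1`. Hence `₂F₁(a, 1 - a; 2a; z) ≥ δ` on `[0, 1)`.
Since `a + |1 - a| < 2a`, Raabe's test gives absolute convergence at `z = 1`, and Abel's theorem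
carries the bound to `z = 1`. The partition functions are then products of positive factors.
-/

open Finset Filter Topology

@[simp] lemma risingFac_zero (q : ℝ) : risingFac q 0 = 1 := by simp [risingFac]

lemma risingFac_succ (q : ℝ) (n : ℕ) : risingFac q (n + 1) = risingFac q n * (q + n) :=
  prod_range_succ _ _

lemma risingFac_pos {q : ℝ} (hq : 0 < q) (n : ℕ) : 0 < risingFac q n :=
  prod_pos fun _ _ => by positivity

lemma risingFac_nonneg {q : ℝ} (hq : 0 ≤ q) (n : ℕ) : 0 ≤ risingFac q n :=
  prod_nonneg fun _ _ => by positivity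

lemma abs_risingFac_le (q : ℝ) (n : ℕ) : |risingFac q n| ≤ risingFac |q| n := by
  rw [risingFac, abs_prod]
  exact prod_le_prod (fun _ _ => abs_nonneg _) fun i _ => by
    simpa using abs_add_le q (i : ℝ)

lemma risingFac_mul_Gamma {q : ℝ} (hq : 0 < q) (n : ℕ) :
    risingFac q n * Real.Gamma q = Real.Gamma (q + n) := by
  induction n with
  | zero => simp
  | succ n ih =>
    rw [risingFac_succ, mul_right_comm, ih, Nat.cast_succ, ← add_assoc,
      Real.Gamma_add_one (by positivity), mul_comm]

noncomputable def hypCoeff (a b c : ℝ) (n : ℕ) : ℝ :=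
  risingFac a n * risingFac b n / (risingFac c n * (Nat.factorial n : ℝ))

/-- The `n`-th coefficient of the binomial series of `(1 - z) ^ (-β)`. -/
noncomputable def negBinomCoeff (β : ℝ) (n : ℕ) : ℝ :=
  risingFac β n / (Nat.factorial n : ℝ)

section Coefficients

variable {a b c β : ℝ}

lemma hyp2F1_eq_tsum (a b c z : ℝ) : hyp2F1 a b c z = ∑' n, hypCoeff a b c n * z ^ n := rfl

@[simp] lemma hypCoeff_zero : hypCoeff a b c 0 = 1 := by simp [hypCoeff]

@[simp] lemma negBinomCoeff_zero : negBinomCoeff β 0 = 1 := by simp [negBinomCoeff]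

lemma hypCoeff_succ (hc : 0 < c) (n : ℕ) :
    hypCoeff a b c (n + 1) =
      hypCoeff a b c n * ((a + n) * (b + n) / ((c + n) * (n + 1))) := by
  have := (risingFac_pos hc n).ne'
  have : c + n ≠ 0 := by positivity
  simp only [hypCoeff, risingFac_succ, Nat.factorial_succ, Nat.cast_mul, Nat.cast_succ]
  field_simp

lemma negBinomCoeff_succ (n : ℕ) :
    negBinomCoeff β (n + 1) = negBinomCoeff β n * ((β + n) / (n + 1)) := by
  simp only [negBinomCoeff, risingFac_succ, Nat.factorial_succ, Nat.cast_mul, Nat.cast_succ]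
  field_simp

lemma hypCoeff_nonneg (ha : 0 ≤ a) (hb : 0 ≤ b) (hc : 0 < c) (n : ℕ) :
    0 ≤ hypCoeff a b c n := by
  have := risingFac_nonneg ha n
  have := risingFac_nonneg hb n
  have := risingFac_pos hc n
  unfold hypCoeff; positivity

lemma negBinomCoeff_nonneg (hβ : 0 ≤ β) (n : ℕ) : 0 ≤ negBinomCoeff β n := by
  have := risingFac_nonneg hβ n
  unfold negBinomCoeff; positivity

lemma abs_hypCoeff_le (ha : 0 ≤ a) (hc : 0 < c) (n : ℕ) :
    |hypCoeff a b c n| ≤ hypCoeff a |b| c n := by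
  have hden : 0 < risingFac c n * (Nat.factorial n : ℝ) := by
    have := risingFac_pos hc n; positivity
  rw [hypCoeff, hypCoeff, abs_div, abs_mul, abs_of_nonneg (risingFac_nonneg ha n),
    abs_of_pos hden]
  gcongr
  · exact risingFac_nonneg ha n
  · exact abs_risingFac_le b n

end Coefficients

section EulerTransformation

variable {a b c : ℝ}

lemma hypCoeff_mul_negBinomCoeff_wz (hc : 0 < c) (k m : ℕ) :
    (c - a + (k + m)) * (c - b + (k + m)) * (hypCoeff a b c k * negBinomCoeff (c - a - b) m) =
      (k + m + 1) * (c + (k + m)) * (hypCoeff a b c k * negBinomCoeff (c - a - b) (m + 1)) +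
        ((k + 1) * (c + k) * (hypCoeff a b c (k + 1) * negBinomCoeff (c - a - b) m) -
          k * (c - 1 + k) * (hypCoeff a b c k * negBinomCoeff (c - a - b) (m + 1))) := by
  rw [hypCoeff_succ hc, negBinomCoeff_succ]
  have : c + k ≠ 0 := by positivity
  field_simp
  ring

lemma sum_hypCoeff_mul_negBinomCoeff_recurrence (hc : 0 < c) (n : ℕ) :
    (c - a + n) * (c - b + n) *
        ∑ k ∈ range (n + 1), hypCoeff a b c k * negBinomCoeff (c - a - b) (n - k) =
      (n + 1) * (c + n) *
        ∑ k ∈ range (n + 2), hypCoeff a b c k * negBinomCoeff (c - a - b) (n + 1 - k) := by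
  set G : ℕ → ℝ := fun j => j * (c - 1 + j) *
    (hypCoeff a b c j * negBinomCoeff (c - a - b) (n + 1 - j)) with hG
  have hterm : ∀ k ∈ range (n + 1),
      (c - a + n) * (c - b + n) * (hypCoeff a b c k * negBinomCoeff (c - a - b) (n - k)) =
        (n + 1) * (c + n) * (hypCoeff a b c k * negBinomCoeff (c - a - b) (n + 1 - k)) +
          (G (k + 1) - G k) := by
    intro k hk
    obtain ⟨m, rfl⟩ := Nat.exists_eq_add_of_le (Nat.lt_succ_iff.mp (mem_range.mp hk))
    have h := hypCoeff_mul_negBinomCoeff_wz (a := a) (b := b) hc k m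
    simp only [hG, Nat.add_sub_cancel_left, Nat.cast_add, Nat.cast_one,
      show k + m + 1 - k = m + 1 by omega, show k + m + 1 - (k + 1) = m by omega] at h ⊢
    linear_combination h
  rw [mul_sum, sum_congr rfl hterm, sum_add_distrib, sum_range_sub G, ← mul_sum,
    sum_range_succ _ (n + 1)]
  simp only [hG, Nat.sub_self, negBinomCoeff_zero, Nat.cast_zero, zero_mul, sub_zero,
    Nat.cast_succ]
  ring

/-- Euler's transformation
`₂F₁(a, b; c; z) (1 - z) ^ (a + b - c) = ₂F₁(c - a, c - b; c; z)`, read on coefficients. -/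
theorem sum_hypCoeff_mul_negBinomCoeff (hc : 0 < c) (n : ℕ) :
    ∑ k ∈ range (n + 1), hypCoeff a b c k * negBinomCoeff (c - a - b) (n - k) =
      hypCoeff (c - a) (c - b) c n := by
  induction n with
  | zero => simp
  | succ n ih =>
    have hne : ((n : ℝ) + 1) * (c + n) ≠ 0 := by positivity
    apply mul_left_cancel₀ hne
    rw [← sum_hypCoeff_mul_negBinomCoeff_recurrence hc, ih, hypCoeff_succ hc]
    field_simp

lemma sum_hypCoeff_self_one_sub_mul_negBinomCoeff (ha : 0 < a) (n : ℕ) :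
    ∑ k ∈ range (n + 1),
        hypCoeff a (1 - a) (2 * a) k * negBinomCoeff (2 * a - 1) (n - k) =
      hypCoeff a (3 * a - 1) (2 * a) n := by
  have h := sum_hypCoeff_mul_negBinomCoeff (a := a) (b := 1 - a) (by positivity : 0 < 2 * a) n
  rwa [show 2 * a - a - (1 - a) = 2 * a - 1 by ring, show 2 * a - a = a by ring,
    show 2 * a - (1 - a) = 3 * a - 1 by ring] at h

end EulerTransformation

section LowerBound

lemma Real.Gamma_mul_Gamma_le {x y d : ℝ} (hx : 0 < x) (hd : 0 < d) (hxy : x + d < y) :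
    Real.Gamma (x + d) * Real.Gamma y ≤ Real.Gamma x * Real.Gamma (y + d) := by
  have hpos : ∀ {t : ℝ}, x ≤ t → 0 < t := fun ht => lt_of_lt_of_le hx ht
  have h₁ := Real.convexOn_log_Gamma.slope_mono_adjacent (hpos le_rfl) (hpos (by linarith))
    (lt_add_of_pos_right x hd) hxy
  have h₂ := Real.convexOn_log_Gamma.slope_mono_adjacent (hpos (by linarith))
    (hpos (by linarith)) hxy (lt_add_of_pos_right y hd)
  simp only [Function.comp_apply, add_sub_cancel_left] at h₁ h₂
  have hlog := (div_le_div_iff_of_pos_right hd).mp (h₁.trans h₂)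
  have := Real.Gamma_pos_of_pos hx
  have := Real.Gamma_pos_of_pos (hpos (show x ≤ x + d by linarith))
  have := Real.Gamma_pos_of_pos (hpos (show x ≤ y by linarith))
  have := Real.Gamma_pos_of_pos (hpos (show x ≤ y + d by linarith))
  rw [← Real.log_le_log_iff (by positivity) (by positivity), Real.log_mul (by positivity)
    (by positivity), Real.log_mul (by positivity) (by positivity)]
  linarith

variable {a : ℝ}

lemma exists_pos_mul_risingFac_le (ha : 1 / 2 < a) : ∃ δ > 0, ∀ n,
    δ * (risingFac (2 * a) n * risingFac (2 * a - 1) n) ≤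
      risingFac a n * risingFac (3 * a - 1) n := by
  rcases le_or_gt a 1 with ha1 | ha1
  · refine ⟨1, one_pos, fun n => ?_⟩
    simp only [one_mul, risingFac, ← prod_mul_distrib]
    refine prod_le_prod (fun i _ => ?_) fun i _ => ?_ <;>
      nlinarith [Nat.cast_nonneg (α := ℝ) i]
  · have hΓa := Real.Gamma_pos_of_pos (show 0 < a by linarith)
    have hΓ3a := Real.Gamma_pos_of_pos (show 0 < 3 * a - 1 by linarith)
    have hΓ2a := Real.Gamma_pos_of_pos (show 0 < 2 * a by linarith)
    have hΓ2a1 := Real.Gamma_pos_of_pos (show 0 < 2 * a - 1 by linarith)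
    refine ⟨Real.Gamma (2 * a) * Real.Gamma (2 * a - 1) / (Real.Gamma a * Real.Gamma (3 * a - 1)),
      by positivity, fun n => ?_⟩
    rw [div_mul_eq_mul_div, div_le_iff₀ (by positivity)]
    calc Real.Gamma (2 * a) * Real.Gamma (2 * a - 1) *
          (risingFac (2 * a) n * risingFac (2 * a - 1) n)
        = Real.Gamma (a + n + (a - 1)) * Real.Gamma (2 * a + n) := by
          rw [← risingFac_mul_Gamma (show 0 < 2 * a by linarith),
            show a + n + (a - 1) = 2 * a - 1 + n by ring,
            ← risingFac_mul_Gamma (show 0 < 2 * a - 1 by linarith)]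
          ring
      _ ≤ Real.Gamma (a + n) * Real.Gamma (2 * a + n + (a - 1)) :=
          Real.Gamma_mul_Gamma_le (by positivity) (by linarith) (by linarith)
      _ = risingFac a n * risingFac (3 * a - 1) n * (Real.Gamma a * Real.Gamma (3 * a - 1)) := by
          rw [← risingFac_mul_Gamma (show 0 < a by linarith),
            show 2 * a + n + (a - 1) = 3 * a - 1 + n by ring,
            ← risingFac_mul_Gamma (show 0 < 3 * a - 1 by linarith)]
          ring

lemma exists_pos_mul_negBinomCoeff_le_hypCoeff (ha : 1 / 2 < a) :
    ∃ δ > 0, ∀ n, δ * negBinomCoeff (2 * a - 1) n ≤ hypCoeff a (3 * a - 1) (2 * a) n := by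
  obtain ⟨δ, hδ, h⟩ := exists_pos_mul_risingFac_le ha
  refine ⟨δ, hδ, fun n => ?_⟩
  have h2a := risingFac_pos (show 0 < 2 * a by linarith) n
  calc δ * negBinomCoeff (2 * a - 1) n
      = δ * (risingFac (2 * a) n * risingFac (2 * a - 1) n) /
          (risingFac (2 * a) n * (Nat.factorial n : ℝ)) := by
        unfold negBinomCoeff; field_simp
    _ ≤ hypCoeff a (3 * a - 1) (2 * a) n :=
        div_le_div_of_nonneg_right (h n) (by positivity)

end LowerBound

section Convergence

/-- Raabe's test, in the telescoping form `c uₙ ≤ n uₙ - (n + 1) uₙ₊₁`. -/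
lemma summable_of_raabe {u : ℕ → ℝ} {c : ℝ} (hc : 0 < c) (hu : ∀ n, 0 ≤ u n)
    (h : ∀ᶠ n in atTop, c * u n ≤ n * u n - (n + 1) * u (n + 1)) : Summable u := by
  obtain ⟨N, hN⟩ := eventually_atTop.mp h
  set w : ℕ → ℝ := fun j => (N + j : ℕ) * u (N + j)
  refine (summable_nat_add_iff N).mp
    (summable_of_sum_range_le (c := w 0 / c) (fun j => hu _) fun m => ?_)
  have htel : ∑ j ∈ range m, c * u (j + N) ≤ ∑ j ∈ range m, (w j - w (j + 1)) :=
    sum_le_sum fun j _ => by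
      simpa [w, add_comm, add_left_comm, add_assoc] using hN (j + N) (Nat.le_add_left N j)
  rw [sum_range_sub', ← mul_sum] at htel
  rw [le_div_iff₀ hc, mul_comm]
  exact htel.trans (sub_le_self _ (mul_nonneg (Nat.cast_nonneg _) (hu _)))

variable {a b c : ℝ}

theorem summable_hypCoeff (ha : 0 ≤ a) (hb : 0 ≤ b) (hc : 0 < c) (habc : a + b < c) :
    Summable (hypCoeff a b c) := by
  set γ := c - a - b
  have hγ : 0 < γ := by simp only [γ]; linarith
  refine summable_of_raabe (half_pos hγ) (hypCoeff_nonneg ha hb hc) ?_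
  filter_upwards [tendsto_natCast_atTop_atTop.eventually_ge_atTop ((2 * a * b + c * γ) / γ)]
    with n hn
  rw [div_le_iff₀ hγ] at hn
  have hcn : 0 < c + n := by positivity
  have hdiff : n * hypCoeff a b c n - (n + 1) * hypCoeff a b c (n + 1) =
      hypCoeff a b c n * ((n * γ - a * b) / (c + n)) := by
    rw [hypCoeff_succ hc]
    field_simp
    ring
  rw [hdiff, mul_comm]
  refine mul_le_mul_of_nonneg_left ?_ (hypCoeff_nonneg ha hb hc n)
  rw [le_div_iff₀ hcn]
  nlinarith

lemma summable_norm_hypCoeff_mul_pow (ha : 0 ≤ a) (hc : 0 < c) (habc : a + |b| < c) {z : ℝ}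
    (hz : |z| ≤ 1) : Summable fun n => ‖hypCoeff a b c n * z ^ n‖ := by
  refine (summable_hypCoeff ha (abs_nonneg b) hc habc).of_nonneg_of_le
    (fun _ => norm_nonneg _) fun n => ?_
  rw [norm_mul, norm_pow, Real.norm_eq_abs]
  calc |hypCoeff a b c n| * |z| ^ n ≤ hypCoeff a |b| c n * 1 :=
        mul_le_mul (abs_hypCoeff_le ha hc n) (pow_le_one₀ (abs_nonneg z) hz) (by positivity)
          (hypCoeff_nonneg ha (abs_nonneg b) hc n)
    _ = hypCoeff a |b| c n := mul_one _

lemma summable_norm_negBinomCoeff_mul_pow (β : ℝ) {z : ℝ} (hz : |z| < 1) :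
    Summable fun n => ‖negBinomCoeff β n * z ^ n‖ := by
  refine summable_of_ratio_norm_eventually_le (r := (1 + |z|) / 2) (by linarith) ?_
  filter_upwards [tendsto_natCast_atTop_atTop.eventually_ge_atTop (4 * |β| / (1 - |z|))]
    with n hn
  rw [div_le_iff₀ (by linarith)] at hn
  have hratio : |β + n| / (n + 1) * |z| ≤ (1 + |z|) / 2 := by
    rw [div_mul_eq_mul_div, div_le_iff₀ (by positivity)]
    nlinarith [abs_add_le β n, abs_nonneg z, abs_nonneg β,
      abs_of_nonneg (Nat.cast_nonneg (α := ℝ) n)]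
  simp only [norm_mul, norm_pow, Real.norm_eq_abs, abs_abs, negBinomCoeff_succ,
    abs_div, pow_succ]
  rw [abs_of_pos (show (0 : ℝ) < n + 1 by positivity)]
  calc |negBinomCoeff β n| * (|β + n| / (n + 1)) * (|z| ^ n * |z|)
      = |β + n| / (n + 1) * |z| * (|negBinomCoeff β n| * |z| ^ n) := by ring
    _ ≤ (1 + |z|) / 2 * (|negBinomCoeff β n| * |z| ^ n) := by gcongr

end Convergence

section Positivity

variable {a : ℝ}

lemma add_abs_one_sub_lt_two_mul (ha : 1 / 2 < a) : a + |1 - a| < 2 * a := by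
  linarith [abs_sub_lt_iff.mpr (⟨by linarith, by linarith⟩ : 1 - a < a ∧ a - 1 < a)]

lemma summable_hypCoeff_self_one_sub_mul_pow (ha : 1 / 2 < a) {z : ℝ} (hz : |z| ≤ 1) :
    Summable fun n => hypCoeff a (1 - a) (2 * a) n * z ^ n :=
  (summable_norm_hypCoeff_mul_pow (by linarith) (by linarith)
    (add_abs_one_sub_lt_two_mul ha) hz).of_norm

lemma le_hyp2F1_self_one_sub_of_lt_one (ha : 1 / 2 < a) {δ : ℝ}
    (hδ : ∀ n, δ * negBinomCoeff (2 * a - 1) n ≤ hypCoeff a (3 * a - 1) (2 * a) n)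
    {z : ℝ} (hz0 : 0 ≤ z) (hz1 : z < 1) : δ ≤ hyp2F1 a (1 - a) (2 * a) z := by
  set E := ∑' n, negBinomCoeff (2 * a - 1) n * z ^ n
  have hT := summable_norm_hypCoeff_mul_pow (by linarith) (by linarith)
    (add_abs_one_sub_lt_two_mul ha) (abs_le.mpr ⟨by linarith, hz1.le⟩)
  have hE := summable_norm_negBinomCoeff_mul_pow (2 * a - 1) (abs_lt.mpr ⟨by linarith, hz1⟩)
  have hprod : HasSum (fun n => hypCoeff a (3 * a - 1) (2 * a) n * z ^ n)
      (hyp2F1 a (1 - a) (2 * a) z * E) := by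
    refine (hasSum_sum_range_mul_of_summable_norm hT hE).congr_fun fun n => ?_
    rw [← sum_hypCoeff_self_one_sub_mul_negBinomCoeff (by linarith), sum_mul]
    refine sum_congr rfl fun k hk => ?_
    rw [← pow_sub_mul_pow z (Nat.le_of_lt_succ (mem_range.mp hk))]
    ring
  have hE1 : 1 ≤ E := by
    simpa using hE.of_norm.le_tsum 0 fun n _ =>
      mul_nonneg (negBinomCoeff_nonneg (by linarith) n) (pow_nonneg hz0 n)
  have hle : δ * E ≤ hyp2F1 a (1 - a) (2 * a) z * E :=
    hasSum_le (fun n => by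
        rw [← mul_assoc]; exact mul_le_mul_of_nonneg_right (hδ n) (pow_nonneg hz0 n))
      (hE.of_norm.hasSum.mul_left δ) hprod
  exact le_of_mul_le_mul_right hle (by linarith)

theorem hyp2F1_self_one_sub_pos (ha : 1 / 2 < a) {z : ℝ} (hz0 : 0 ≤ z) (hz1 : z ≤ 1) :
    0 < hyp2F1 a (1 - a) (2 * a) z := by
  obtain ⟨δ, hδ, hcoeff⟩ := exists_pos_mul_negBinomCoeff_le_hypCoeff ha
  refine hδ.trans_le ?_
  rcases hz1.lt_or_eq with hz1 | rfl
  · exact le_hyp2F1_self_one_sub_of_lt_one ha hcoeff hz0 hz1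
  · have hf : Summable (hypCoeff a (1 - a) (2 * a)) := by
      simpa using summable_hypCoeff_self_one_sub_mul_pow ha (z := 1) (by simp)
    have habel := Real.tendsto_tsum_powerSeries_nhdsWithin_lt hf.hasSum.tendsto_sum_nat
    rw [hyp2F1_eq_tsum]
    simp only [one_pow, mul_one]
    refine ge_of_tendsto habel ?_
    filter_upwards [Ioo_mem_nhdsLT zero_lt_one] with z hz
    exact le_hyp2F1_self_one_sub_of_lt_one ha hcoeff hz.1.le hz.2

end Positivity

section PartitionFunctions

variable {κ x₁ x₂ x₃ x₄ : ℝ}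

lemma crossRatio_pos (h₁₂ : x₁ < x₂) (h₂₃ : x₂ < x₃) (h₃₄ : x₃ < x₄) :
    0 < crossRatio x₁ x₂ x₃ x₄ :=
  div_pos (mul_pos (by linarith) (by linarith)) (mul_pos (by linarith) (by linarith))

lemma one_sub_crossRatio_pos (h₁₂ : x₁ < x₂) (h₂₃ : x₂ < x₃) (h₃₄ : x₃ < x₄) :
    0 < 1 - crossRatio x₁ x₂ x₃ x₄ := by
  have hden : 0 < (x₃ - x₁) * (x₄ - x₂) := mul_pos (by linarith) (by linarith)
  rw [crossRatio, sub_pos, div_lt_one hden]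
  nlinarith

lemma Za_pos (h₁₂ : x₁ < x₂) (h₂₃ : x₂ < x₃) (h₃₄ : x₃ < x₄)
    (hF : ∀ z ∈ Set.Ioc (0 : ℝ) 1, 0 < hyp2F1 (4 / κ) (1 - 4 / κ) (8 / κ) z) :
    0 < Za κ x₁ x₂ x₃ x₄ := by
  have hχ := crossRatio_pos h₁₂ h₂₃ h₃₄
  have hχ' := one_sub_crossRatio_pos h₁₂ h₂₃ h₃₄
  unfold Za
  refine mul_pos (mul_pos (mul_pos ?_ ?_) (Real.rpow_pos_of_pos hχ' _))
    (div_pos (hF _ ⟨hχ', by linarith⟩) (hF 1 ⟨one_pos, le_rfl⟩)) <;>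
  exact Real.rpow_pos_of_pos (by linarith) _

lemma Zb_pos (h₁₂ : x₁ < x₂) (h₂₃ : x₂ < x₃) (h₃₄ : x₃ < x₄)
    (hF : ∀ z ∈ Set.Ioc (0 : ℝ) 1, 0 < hyp2F1 (4 / κ) (1 - 4 / κ) (8 / κ) z) :
    0 < Zb κ x₁ x₂ x₃ x₄ := by
  have hχ := crossRatio_pos h₁₂ h₂₃ h₃₄
  have hχ' := one_sub_crossRatio_pos h₁₂ h₂₃ h₃₄
  unfold Zb
  refine mul_pos (mul_pos (mul_pos ?_ ?_) (Real.rpow_pos_of_pos hχ _))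
    (div_pos (hF _ ⟨hχ, by linarith⟩) (hF 1 ⟨one_pos, le_rfl⟩)) <;>
  exact Real.rpow_pos_of_pos (by linarith) _

end PartitionFunctions

/-- for `κ ∈ (0,8)` and `z ∈ (0,1)`, the hypergeometric series
`∑ (4/κ)ₙ(1−4/κ)ₙ/((8/κ)ₙ n!) zⁿ` converges with strictly positive sum;
consequently `Z_a^(κ) > 0` and `Z_b^(κ) > 0` on the chamber `x₁ < x₂ < x₃ < x₄`. -/
theorem statement19 (κ : ℝ) (hκ : κ ∈ Set.Ioo (0:ℝ) 8) :
    (∀ z ∈ Set.Ioo (0:ℝ) 1,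
      Summable (fun n : ℕ =>
        risingFac (4/κ) n * risingFac (1 - 4/κ) n /
          (risingFac (8/κ) n * (Nat.factorial n : ℝ)) * z ^ n) ∧
      0 < hyp2F1 (4/κ) (1 - 4/κ) (8/κ) z) ∧
    ∀ x₁ x₂ x₃ x₄ : ℝ, x₁ < x₂ → x₂ < x₃ → x₃ < x₄ →
      0 < Za κ x₁ x₂ x₃ x₄ ∧ 0 < Zb κ x₁ x₂ x₃ x₄ := by
  obtain ⟨hκ0, hκ8⟩ := hκ
  have ha : 1 / 2 < 4 / κ := by rw [lt_div_iff₀ hκ0]; linarith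
  have h8 : 8 / κ = 2 * (4 / κ) := by ring
  have hF : ∀ z ∈ Set.Ioc (0 : ℝ) 1, 0 < hyp2F1 (4 / κ) (1 - 4 / κ) (8 / κ) z := fun z hz => by
    rw [h8]; exact hyp2F1_self_one_sub_pos ha hz.1.le hz.2
  refine ⟨fun z hz => ⟨?_, hF z (Set.Ioo_subset_Ioc_self hz)⟩,
    fun _ _ _ _ h₁₂ h₂₃ h₃₄ => ⟨Za_pos h₁₂ h₂₃ h₃₄ hF, Zb_pos h₁₂ h₂₃ h₃₄ hF⟩⟩
  rw [h8]
  exact summable_hypCoeff_self_one_sub_mul_pow ha (abs_le.mpr ⟨by linarith [hz.1], hz.2.le⟩)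
end
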